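/- Let n be a positive natural number and let A and B be n×n real matrices such that A is symmetric (Aᵀ = A), B is symmetric, and B is positive definite (xᵀBx > 0 for every nonzero x ∈ ℝⁿ). Then the complex matrix C := A + iB (where A and B are regarded as complex matrices via entrywise coercion ℝ → ℂ) is nonsingular, i.e. det(A + iB) ≠ 0. -/

import Mathlib

/-!
If `(A + iB) z = 0` with `z ≠ 0`, then `0 = Im (z* (A + iB) z) = Im (z* A z) + Re (z* B z)`.
The first term vanishes because `A` is Hermitian, and the second is `xᵀBx + yᵀBy > 0` for
`z = x + iy`, i.e. the complexification of a real positive definite matrix is positive definite.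
-/

open Matrix Complex ComplexOrder

namespace Matrix

lemma IsHermitian.map_ofReal {n : Type*} {A : Matrix n n ℝ} (hA : A.IsHermitian) :
    (A.map ofReal).IsHermitian :=
  hA.map _ fun r ↦ (conj_ofReal r).symm

variable {n : Type*} [Fintype n]

lemma re_star_dotProduct_map_ofReal_mulVec (B : Matrix n n ℝ) (z : n → ℂ) :
    (star z ⬝ᵥ (B.map ofReal *ᵥ z)).re =
      (fun i ↦ (z i).re) ⬝ᵥ (B *ᵥ fun i ↦ (z i).re) +
        (fun i ↦ (z i).im) ⬝ᵥ (B *ᵥ fun i ↦ (z i).im) := by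
  simp only [dotProduct, mulVec, re_sum, Finset.mul_sum, ← Finset.sum_add_distrib]
  refine Finset.sum_congr rfl fun i _ ↦ Finset.sum_congr rfl fun j _ ↦ ?_
  simp only [Pi.star_apply, map_apply, mul_re, mul_im, star_def, conj_re, conj_im, ofReal_re,
    ofReal_im]
  ring

lemma PosDef.map_ofReal {B : Matrix n n ℝ} (hB : B.PosDef) : (B.map ofReal).PosDef := by
  have hBc := hB.isHermitian.map_ofReal
  refine .of_dotProduct_mulVec_pos hBc fun z hz ↦
    lt_def.2 ⟨?_, (hBc.im_star_dotProduct_mulVec_self z).symm⟩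
  rw [zero_re, re_star_dotProduct_map_ofReal_mulVec]
  have hpos : ∀ v : n → ℝ, v ≠ 0 → 0 < v ⬝ᵥ (B *ᵥ v) := fun v hv ↦ by
    simpa using hB.dotProduct_mulVec_pos hv
  have hnonneg : ∀ v : n → ℝ, 0 ≤ v ⬝ᵥ (B *ᵥ v) := fun v ↦ by
    simpa using hB.posSemidef.dotProduct_mulVec_nonneg v
  obtain hx | hy : (fun i ↦ (z i).re) ≠ 0 ∨ (fun i ↦ (z i).im) ≠ 0 := by
    by_contra! h
    exact hz (funext fun i ↦ Complex.ext (congrFun h.1 i) (congrFun h.2 i))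
  · linarith [hpos _ hx, hnonneg fun i ↦ (z i).im]
  · linarith [hnonneg fun i ↦ (z i).re, hpos _ hy]

theorem det_add_I_smul_ne_zero [DecidableEq n] {H N : Matrix n n ℂ} (hH : H.IsHermitian)
    (hN : N.PosDef) : (H + I • N).det ≠ 0 := by
  intro hdet
  obtain ⟨z, hz, hHNz⟩ := exists_mulVec_eq_zero_iff.2 hdet
  have hsplit : (star z ⬝ᵥ ((H + I • N) *ᵥ z)).im =
      (star z ⬝ᵥ (H *ᵥ z)).im + (star z ⬝ᵥ (N *ᵥ z)).re := by
    simp [add_mulVec, smul_mulVec, dotProduct_add, dotProduct_smul]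
  have hNz : 0 < (star z ⬝ᵥ (N *ᵥ z)).re := by
    simpa using (lt_def.1 (hN.dotProduct_mulVec_pos hz)).1
  have hHz : (star z ⬝ᵥ (H *ᵥ z)).im = 0 := hH.im_star_dotProduct_mulVec_self z
  rw [hHNz, dotProduct_zero, zero_im, hHz, zero_add] at hsplit
  linarith

end Matrix

theorem det_add_smul_I_ne_zero_general
    (n : ℕ)
    (A B : Matrix (Fin n) (Fin n) ℝ)
    (hA : Aᵀ = A) (hB : Bᵀ = B)
    (hBpos : ∀ x : Fin n → ℝ, x ≠ 0 → 0 < x ⬝ᵥ B.mulVec x) :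
    (A.map (Complex.ofReal) + Complex.I • B.map (Complex.ofReal)).det ≠ 0 :=
  det_add_I_smul_ne_zero (isHermitian_iff_isSymm.2 hA).map_ofReal
    (PosDef.of_dotProduct_mulVec_pos (isHermitian_iff_isSymm.2 hB) hBpos).map_ofReal

/-- If `A` and `B` are real symmetric `n × n` matrices with `B` positive definite,
then the complex matrix `A + i B` is nonsingular. -/
theorem det_add_smul_I_ne_zero
    (n : ℕ) (hn : 0 < n)
    (A B : Matrix (Fin n) (Fin n) ℝ)
    (hA : Aᵀ = A) (hB : Bᵀ = B)
    (hBpos : ∀ x : Fin n → ℝ, x ≠ 0 → 0 < x ⬝ᵥ B.mulVec x) :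
    (A.map (Complex.ofReal) + Complex.I • B.map (Complex.ofReal)).det ≠ 0 :=
  det_add_smul_I_ne_zero_general n A B hA hB hBpos
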